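/- arXiv:1510.00043 — 2 statements merged into one kernel-verified Lean document; each statement's English description precedes it below -/
import Mathlib

section
/- There exists a unique real number κ > 0 with ψ₁₂(κi) = 0. This κ satisfies the equation (κi)² + (ν(2−σ)/μ)·(κi)^σ + (2−σ)/σ = 0, and 2.2142 < κ < 2.2143. -/
open Complex

/-- `σ = (2/π)·arctan((3+√5)/2)`. -/
noncomputable def sigma : ℝ := 2 / Real.pi * Real.arctan ((3 + Real.sqrt 5) / 2)

/-- `ν = 1 - 2√5/3`. -/
noncomputable def nu : ℝ := 1 - 2 * Real.sqrt 5 / 3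

/-- `μ = (σ(σ-2)/3)·√(2/(1-cos(σπ)))·e^{iσπ/2}`. -/
noncomputable def mu : ℂ :=
  ((sigma * (sigma - 2) / 3 : ℝ) : ℂ) *
    ((Real.sqrt (2 / (1 - Real.cos (sigma * Real.pi))) : ℝ) : ℂ) *
    Complex.exp (((sigma * Real.pi / 2 : ℝ) : ℂ) * I)

/-- `ψ₁₂(z) = (μ/z^σ)·(z²/(2-σ) + 1/σ) + ν`, with the principal power `z^σ`. -/
noncomputable def psi12 (z : ℂ) : ℂ :=
  mu / z ^ (sigma : ℂ) * (z ^ 2 / (2 - (sigma : ℂ)) + 1 / (sigma : ℂ)) + (nu : ℂ)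

/-!
On the ray `z = κ i`, `κ > 0`, the principal power is `z ^ σ = κ ^ σ e^{iσπ/2}`, whose phase is exactly
that of `μ`. Hence `ψ₁₂(κ i)` is the real function `H κ = a κ ^ (2 - σ) - b κ ^ (-σ) + ν` with `a, b > 0`
(as `0 < σ < 2` and the real factor of `μ` is negative), which is strictly increasing on `(0, ∞)`.
So `H` has at most one positive zero, and its sign change between `2.2142` and `2.2143` gives existence
and the bounds. The equation for `κ i` is `ψ₁₂(z) = 0` multiplied by `(2 - σ) z ^ σ / μ`.

The numerics rest on `σπ = 2 arctan ((3 + √5)/2)`, so that `cos σπ = -√5/3` and `sin σπ = 2/3`: the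
modulus factor of `μ` is `√((9 - 3√5)/2)`, and `σπ - π/2 ∈ [0, π]` has cosine `2/3`, which the Taylor
polynomial of `cos` of degree 8 locates to within `10⁻⁵`.
-/

open Set

lemma ofReal_mul_I_cpow_ofReal {κ : ℝ} (hκ : 0 < κ) (s : ℝ) :
    ((κ : ℂ) * I) ^ (s : ℂ) = ((κ ^ s : ℝ) : ℂ) * exp (((s * Real.pi / 2 : ℝ) : ℂ) * I) := by
  have hz : (κ : ℂ) * I ≠ 0 := mul_ne_zero (ofReal_ne_zero.2 hκ.ne') I_ne_zero
  have harg : arg ((κ : ℂ) * I) = Real.pi / 2 := by rw [arg_real_mul _ hκ, arg_I]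
  have hnorm : ‖(κ : ℂ) * I‖ = κ := by simp [abs_of_pos hκ]
  rw [cpow_def_of_ne_zero hz, Complex.log, hnorm, harg, Real.rpow_def_of_pos hκ]
  push_cast
  rw [← Complex.exp_add]
  ring_nf

lemma Real.abs_cos_sub_taylor_le {x : ℝ} (hx : |x| ≤ 1) :
    |Real.cos x - (1 - x ^ 2 / 2 + x ^ 4 / 24 - x ^ 6 / 720 + x ^ 8 / 40320)|
      ≤ |x| ^ 10 * (11 / 36288000) := by
  set T := ∑ m ∈ Finset.range 10, ((x : ℂ) * I) ^ m / m.factorial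
  have hT : T.re = 1 - x ^ 2 / 2 + x ^ 4 / 24 - x ^ 6 / 720 + x ^ 8 / 40320 := by
    simp [T, Finset.sum_range_succ, mul_pow, pow_succ, Nat.factorial]
    ring
  have hre : (Complex.exp ((x : ℂ) * I) - T).re
      = Real.cos x - (1 - x ^ 2 / 2 + x ^ 4 / 24 - x ^ 6 / 720 + x ^ 8 / 40320) := by
    rw [sub_re, hT, Complex.exp_mul_I]
    simp [Complex.cos_ofReal_re]
  calc _ ≤ ‖Complex.exp ((x : ℂ) * I) - T‖ := hre ▸ abs_re_le_norm _
    _ ≤ ‖(x : ℂ) * I‖ ^ 10 * ((10 + 1 : ℕ) * ((Nat.factorial 10 * 10 : ℕ) : ℝ)⁻¹) :=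
        mod_cast Complex.exp_bound (by simpa using hx) (by norm_num)
    _ = |x| ^ 10 * (11 / 36288000) := by norm_num [Nat.factorial]

lemma rpow_natCast_div_pow {x : ℝ} (hx : 0 ≤ x) (p : ℕ) {q : ℕ} (hq : q ≠ 0) :
    (x ^ ((p : ℝ) / q)) ^ q = x ^ p := by
  rw [← Real.rpow_natCast _ q, ← Real.rpow_mul hx, div_mul_cancel₀ _ (Nat.cast_ne_zero.2 hq),
    Real.rpow_natCast]

lemma le_rpow_natCast_div_iff {x L : ℝ} (hx : 0 ≤ x) (hL : 0 ≤ L) {p q : ℕ} (hq : q ≠ 0) :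
    L ≤ x ^ ((p : ℝ) / q) ↔ L ^ q ≤ x ^ p := by
  rw [← pow_le_pow_iff_left₀ hL (Real.rpow_nonneg hx _) hq, rpow_natCast_div_pow hx p hq]

lemma rpow_natCast_div_le_iff {x U : ℝ} (hx : 0 ≤ x) (hU : 0 ≤ U) {p q : ℕ} (hq : q ≠ 0) :
    x ^ ((p : ℝ) / q) ≤ U ↔ x ^ p ≤ U ^ q := by
  rw [← pow_le_pow_iff_left₀ (Real.rpow_nonneg hx _) hU hq, rpow_natCast_div_pow hx p hq]

lemma strictMonoOn_mul_rpow_sub_mul_inv_rpow {a b p q c : ℝ} (ha : 0 < a) (hb : 0 < b)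
    (hp : 0 < p) (hq : 0 < q) :
    StrictMonoOn (fun x : ℝ => a * x ^ p - b * (x ^ q)⁻¹ + c) (Ioi 0) := by
  intro x (hx : 0 < x) y (hy : 0 < y) hxy
  have h₁ : a * x ^ p < a * y ^ p := by gcongr
  have h₂ : b * (y ^ q)⁻¹ < b * (x ^ q)⁻¹ := by gcongr
  simp only
  linarith

lemma StrictMonoOn.mem_Ioo_of_eq_zero {f : ℝ → ℝ} {s : Set ℝ} (hf : StrictMonoOn f s)
    {a b x : ℝ} (ha : a ∈ s) (hb : b ∈ s) (hx : x ∈ s) (hfa : f a < 0) (hfb : 0 < f b)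
    (hfx : f x = 0) : x ∈ Ioo a b :=
  ⟨(hf.lt_iff_lt ha hx).1 (hfx ▸ hfa), (hf.lt_iff_lt hx hb).1 (hfx ▸ hfb)⟩

lemma existsUnique_pos_eq_zero {f : ℝ → ℝ} (hf : StrictMonoOn f (Ioi 0))
    (hcont : ContinuousOn f (Ioi 0)) {a b : ℝ} (ha : 0 < a) (hab : a ≤ b) (hfa : f a < 0)
    (hfb : 0 < f b) : ∃! x, 0 < x ∧ f x = 0 := by
  have hIcc : Icc a b ⊆ Ioi 0 := fun x hx => ha.trans_le hx.1
  obtain ⟨x, hx, hfx⟩ := intermediate_value_Ioo hab (hcont.mono hIcc) ⟨hfa, hfb⟩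
  have hx₀ : 0 < x := ha.trans hx.1
  exact ⟨x, ⟨hx₀, hfx⟩, fun y ⟨hy₀, hfy⟩ => hf.injOn hy₀ hx₀ (hfy.trans hfx.symm)⟩

lemma sqrt_five_mem : Real.sqrt 5 ∈ Ioo 2.2360679 2.2360680 := by
  constructor
  · exact (Real.lt_sqrt (by norm_num)).2 (by norm_num)
  · exact (Real.sqrt_lt' (by norm_num)).2 (by norm_num)

lemma nu_mem : nu ∈ Ioo (-0.490712) (-0.49071) := by
  obtain ⟨h₁, h₂⟩ := sqrt_five_mem
  constructor <;> (rw [nu]; linarith)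

lemma sigma_mul_pi : sigma * Real.pi = 2 * Real.arctan ((3 + Real.sqrt 5) / 2) := by
  rw [sigma]; field_simp

lemma one_add_sq_three_add_sqrt_five_div_two :
    1 + ((3 + Real.sqrt 5) / 2) ^ 2 = (9 + 3 * Real.sqrt 5) / 2 := by
  nlinarith [Real.sq_sqrt (show (0 : ℝ) ≤ 5 by norm_num)]

lemma cos_sigma_mul_pi : Real.cos (sigma * Real.pi) = -(Real.sqrt 5 / 3) := by
  rw [sigma_mul_pi, Real.cos_two_mul, Real.cos_sq_arctan, one_add_sq_three_add_sqrt_five_div_two]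
  field_simp
  nlinarith [Real.sq_sqrt (show (0 : ℝ) ≤ 5 by norm_num)]

lemma sigma_mul_pi_mem : sigma * Real.pi ∈ Ioo (Real.pi / 2) Real.pi := by
  have h₁ : Real.pi / 4 < Real.arctan ((3 + Real.sqrt 5) / 2) := by
    rw [← Real.arctan_one]
    exact Real.arctan_strictMono (by linarith [Real.sqrt_nonneg 5])
  have h₂ := Real.arctan_lt_pi_div_two ((3 + Real.sqrt 5) / 2)
  rw [sigma_mul_pi]
  constructor <;> linarith

lemma sin_sigma_mul_pi : Real.sin (sigma * Real.pi) = 2 / 3 := by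
  have hpos : 0 < Real.sin (sigma * Real.pi) :=
    Real.sin_pos_of_pos_of_lt_pi (by linarith [sigma_mul_pi_mem.1, Real.pi_pos]) sigma_mul_pi_mem.2
  have h := Real.sin_sq_add_cos_sq (sigma * Real.pi)
  rw [cos_sigma_mul_pi, neg_sq, div_pow, Real.sq_sqrt (by norm_num)] at h
  nlinarith

lemma cos_sigma_mul_pi_sub_pi_div_two : Real.cos (sigma * Real.pi - Real.pi / 2) = 2 / 3 := by
  rw [Real.cos_sub_pi_div_two, sin_sigma_mul_pi]

lemma sigma_mul_pi_sub_pi_div_two_mem_Icc : sigma * Real.pi - Real.pi / 2 ∈ Icc 0 Real.pi := by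
  obtain ⟨h₁, h₂⟩ := sigma_mul_pi_mem
  constructor <;> linarith

lemma sigma_mul_pi_sub_pi_div_two_mem :
    sigma * Real.pi - Real.pi / 2 ∈ Ioo 0.8410570 0.8410694 := by
  have hcos (x : ℝ) (hx₀ : 0 ≤ x) (hx : x ≤ 1) := abs_le.1 <| abs_of_nonneg hx₀ ▸
    Real.abs_cos_sub_taylor_le (x := x) (by rwa [abs_of_nonneg hx₀])
  have hmem (x : ℝ) (hx₀ : 0 ≤ x) (hx : x ≤ 1) : x ∈ Icc 0 Real.pi :=
    ⟨hx₀, hx.trans (by linarith [Real.pi_gt_three])⟩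
  have hφ := sigma_mul_pi_sub_pi_div_two_mem_Icc
  constructor
  · refine (Real.strictAntiOn_cos.lt_iff_gt hφ (hmem 0.8410570 (by norm_num) (by norm_num))).1 ?_
    have := (hcos 0.8410570 (by norm_num) (by norm_num)).1
    rw [cos_sigma_mul_pi_sub_pi_div_two]
    norm_num at this ⊢
    linarith
  · refine (Real.strictAntiOn_cos.lt_iff_gt (hmem 0.8410694 (by norm_num) (by norm_num)) hφ).1 ?_
    have := (hcos 0.8410694 (by norm_num) (by norm_num)).2
    rw [cos_sigma_mul_pi_sub_pi_div_two]
    norm_num at this ⊢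
    linarith

lemma sigma_mem : sigma ∈ Ioo (195 / 254) (704 / 917) := by
  obtain ⟨h₁, h₂⟩ := sigma_mul_pi_sub_pi_div_two_mem
  have := Real.pi_gt_d6
  have := Real.pi_lt_d6
  constructor <;> nlinarith

lemma sqrt_two_div_one_sub_cos_sigma_mul_pi :
    Real.sqrt (2 / (1 - Real.cos (sigma * Real.pi))) = Real.sqrt ((9 - 3 * Real.sqrt 5) / 2) := by
  have := sqrt_five_mem.1
  congr 1
  rw [cos_sigma_mul_pi, div_eq_div_iff (by linarith) (by norm_num)]
  nlinarith [Real.sq_sqrt (show (0 : ℝ) ≤ 5 by norm_num)]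

lemma sqrt_nine_sub_three_sqrt_five_div_two_mem :
    Real.sqrt ((9 - 3 * Real.sqrt 5) / 2) ∈ Ioo 1.07046 1.07047 := by
  obtain ⟨h₁, h₂⟩ := sqrt_five_mem
  constructor
  · exact (Real.lt_sqrt (by norm_num)).2 (by nlinarith)
  · exact (Real.sqrt_lt' (by norm_num)).2 (by nlinarith)

noncomputable def muAmp : ℝ :=
  sigma * (sigma - 2) / 3 * Real.sqrt (2 / (1 - Real.cos (sigma * Real.pi)))

lemma mu_eq : mu = (muAmp : ℂ) * exp (((sigma * Real.pi / 2 : ℝ) : ℂ) * I) := by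
  rw [mu, muAmp]
  push_cast
  ring

lemma muAmp_neg : muAmp < 0 := by
  obtain ⟨hσ₁, hσ₂⟩ := sigma_mem
  have hs : 0 < Real.sqrt (2 / (1 - Real.cos (sigma * Real.pi))) := by
    rw [sqrt_two_div_one_sub_cos_sigma_mul_pi]
    linarith [sqrt_nine_sub_three_sqrt_five_div_two_mem.1]
  exact mul_neg_of_neg_of_pos (by nlinarith) hs

lemma mu_ne_zero : mu ≠ 0 := by
  rw [mu_eq]
  exact mul_ne_zero (ofReal_ne_zero.2 muAmp_neg.ne) (exp_ne_zero _)

noncomputable def psi12ImagAxis (κ : ℝ) : ℝ :=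
  muAmp / κ ^ sigma * (1 / sigma - κ ^ 2 / (2 - sigma)) + nu

lemma psi12_ofReal_mul_I {κ : ℝ} (hκ : 0 < κ) : psi12 (κ * I) = psi12ImagAxis κ := by
  have hI : ((κ : ℂ) * I) ^ 2 = -((κ ^ 2 : ℝ) : ℂ) := by
    push_cast
    rw [mul_pow, I_sq]
    ring
  rw [psi12, mu_eq, ofReal_mul_I_cpow_ofReal hκ, mul_div_mul_right _ _ (exp_ne_zero _), hI,
    psi12ImagAxis]
  push_cast
  ring

lemma psi12ImagAxis_eq {κ : ℝ} (hκ : 0 < κ) :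
    psi12ImagAxis κ
      = -muAmp / (2 - sigma) * κ ^ (2 - sigma) - -muAmp / sigma * (κ ^ sigma)⁻¹ + nu := by
  obtain ⟨hσ₁, hσ₂⟩ := sigma_mem
  have hpow : κ ^ (2 - sigma) = κ ^ 2 / κ ^ sigma := by
    rw [Real.rpow_sub hκ, Real.rpow_two]
  have : κ ^ sigma ≠ 0 := (Real.rpow_pos_of_pos hκ _).ne'
  have : sigma ≠ 0 := by linarith
  have : 2 - sigma ≠ 0 := by linarith
  rw [psi12ImagAxis, hpow]
  field_simp
  ring

lemma psi12ImagAxis_strictMonoOn : StrictMonoOn psi12ImagAxis (Ioi 0) := by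
  obtain ⟨hσ₁, hσ₂⟩ := sigma_mem
  have h := muAmp_neg
  refine (strictMonoOn_mul_rpow_sub_mul_inv_rpow (div_pos (neg_pos.2 h) (by linarith))
    (div_pos (neg_pos.2 h) (by linarith)) (by linarith) (by linarith)).congr
    fun κ hκ => (psi12ImagAxis_eq hκ).symm

lemma psi12ImagAxis_continuousOn : ContinuousOn psi12ImagAxis (Ioi 0) := by
  have hpow : ContinuousOn (fun κ : ℝ => κ ^ sigma) (Ioi 0) := fun κ hκ =>
    (Real.continuousAt_rpow_const _ _ (Or.inl (ne_of_gt hκ))).continuousWithinAt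
  have hne : ∀ κ ∈ Ioi (0 : ℝ), κ ^ sigma ≠ 0 := fun κ hκ => (Real.rpow_pos_of_pos hκ _).ne'
  exact ((continuousOn_const.div hpow hne).mul
    (continuousOn_const.sub ((continuousOn_id.pow 2).div_const _))).add continuousOn_const

lemma psi12ImagAxis_mul_rpow {κ : ℝ} (hκ : 0 < κ) :
    psi12ImagAxis κ * κ ^ sigma
      = Real.sqrt ((9 - 3 * Real.sqrt 5) / 2) / 3 * (sigma * (1 + κ ^ 2) - 2) + nu * κ ^ sigma := by
  obtain ⟨hσ₁, hσ₂⟩ := sigma_mem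
  have : κ ^ sigma ≠ 0 := (Real.rpow_pos_of_pos hκ _).ne'
  have : sigma ≠ 0 := by linarith
  have : 2 - sigma ≠ 0 := by linarith
  rw [psi12ImagAxis, muAmp, sqrt_two_div_one_sub_cos_sigma_mul_pi]
  field_simp
  ring

lemma le_rpow_sigma_2_2142 : (1.8408935 : ℝ) ≤ 2.2142 ^ sigma := calc
  (1.8408935 : ℝ) ≤ 2.2142 ^ ((195 : ℕ) / (254 : ℕ) : ℝ) :=
    (le_rpow_natCast_div_iff (by norm_num) (by norm_num) (by norm_num)).2 (by norm_num)
  _ ≤ 2.2142 ^ sigma :=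
    Real.rpow_le_rpow_of_exponent_le (by norm_num) (by exact_mod_cast sigma_mem.1.le)

lemma rpow_sigma_2_2143_le : (2.2143 : ℝ) ^ sigma ≤ 1.8409637 := calc
  (2.2143 : ℝ) ^ sigma ≤ 2.2143 ^ ((704 : ℕ) / (917 : ℕ) : ℝ) :=
    Real.rpow_le_rpow_of_exponent_le (by norm_num) (by exact_mod_cast sigma_mem.2.le)
  _ ≤ 1.8409637 := by
    refine (rpow_natCast_div_le_iff (by norm_num) (by norm_num) (by norm_num)).2 ?_
    -- `norm_num` only evaluates these powers after the exponents are split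
    rw [show 704 = 176 * 4 by rfl, show 917 = 131 * 7 by rfl, pow_mul, pow_mul]
    norm_num

lemma psi12ImagAxis_2_2142_neg : psi12ImagAxis 2.2142 < 0 := by
  have hp : (0 : ℝ) < 2.2142 ^ sigma := by positivity
  refine neg_of_mul_neg_left ?_ hp.le
  rw [psi12ImagAxis_mul_rpow (by norm_num)]
  obtain ⟨hσ₁, hσ₂⟩ := sigma_mem
  obtain ⟨hs₁, hs₂⟩ := sqrt_nine_sub_three_sqrt_five_div_two_mem
  obtain ⟨hν₁, hν₂⟩ := nu_mem
  have : nu * 2.2142 ^ sigma ≤ nu * 1.8408935 :=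
    mul_le_mul_of_nonpos_left le_rpow_sigma_2_2142 (by linarith)
  nlinarith

lemma psi12ImagAxis_2_2143_pos : 0 < psi12ImagAxis 2.2143 := by
  have hp : (0 : ℝ) < 2.2143 ^ sigma := by positivity
  refine pos_of_mul_pos_left ?_ hp.le
  rw [psi12ImagAxis_mul_rpow (by norm_num)]
  obtain ⟨hσ₁, hσ₂⟩ := sigma_mem
  obtain ⟨hs₁, hs₂⟩ := sqrt_nine_sub_three_sqrt_five_div_two_mem
  obtain ⟨hν₁, hν₂⟩ := nu_mem
  have : nu * 1.8409637 ≤ nu * 2.2143 ^ sigma :=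
    mul_le_mul_of_nonpos_left rpow_sigma_2_2143_le (by linarith)
  nlinarith

lemma psi12_eq_zero_iff {z : ℂ} (hz : z ≠ 0) :
    psi12 z = 0 ↔
      z ^ 2 + (nu : ℂ) * (2 - (sigma : ℂ)) / mu * z ^ (sigma : ℂ) + (2 - (sigma : ℂ)) / sigma = 0 := by
  obtain ⟨hσ₁, hσ₂⟩ := sigma_mem
  have hσ : (sigma : ℂ) ≠ 0 := ofReal_ne_zero.2 (by linarith)
  have h2σ : 2 - (sigma : ℂ) ≠ 0 := by
    rw [← ofReal_ofNat, ← ofReal_sub]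
    exact ofReal_ne_zero.2 (by linarith)
  have hzσ : z ^ (sigma : ℂ) ≠ 0 := cpow_ne_zero_iff.2 (Or.inl hz)
  have hμ := mu_ne_zero
  have hscale : psi12 z * ((2 - sigma) * z ^ (sigma : ℂ) / mu)
      = z ^ 2 + (nu : ℂ) * (2 - (sigma : ℂ)) / mu * z ^ (sigma : ℂ) + (2 - (sigma : ℂ)) / sigma := by
    rw [psi12]
    field_simp
    ring
  rw [← hscale, mul_eq_zero_iff_right (div_ne_zero (mul_ne_zero h2σ hzσ) hμ)]

theorem stmt2 :
    (∃! κ : ℝ, 0 < κ ∧ psi12 (κ * I) = 0) ∧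
    (∀ κ : ℝ, 0 < κ → psi12 (κ * I) = 0 →
      (((κ : ℂ) * I) ^ 2 + ((nu : ℂ) * (2 - (sigma : ℂ)) / mu) * ((κ : ℂ) * I) ^ (sigma : ℂ)
          + (2 - (sigma : ℂ)) / (sigma : ℂ) = 0 ∧
        2.2142 < κ ∧ κ < 2.2143)) := by
  have hreal (κ : ℝ) (hκ : 0 < κ) : psi12 (κ * I) = 0 ↔ psi12ImagAxis κ = 0 := by
    rw [psi12_ofReal_mul_I hκ, ofReal_eq_zero]
  refine ⟨?_, fun κ hκ hψ => ⟨?_, ?_⟩⟩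
  · refine (existsUnique_congr fun κ => and_congr_right (hreal κ)).2 ?_
    exact existsUnique_pos_eq_zero psi12ImagAxis_strictMonoOn psi12ImagAxis_continuousOn
      (by norm_num) (by norm_num) psi12ImagAxis_2_2142_neg psi12ImagAxis_2_2143_pos
  · exact (psi12_eq_zero_iff (mul_ne_zero (ofReal_ne_zero.2 hκ.ne') I_ne_zero)).1 hψ
  · exact psi12ImagAxis_strictMonoOn.mem_Ioo_of_eq_zero (by norm_num) (by norm_num) hκ
      psi12ImagAxis_2_2142_neg psi12ImagAxis_2_2143_pos ((hreal κ hκ).1 hψ)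
end

section
/- Let U ⊆ ℂ be open, let f : U → ℂ be holomorphic, and let z₁ ≠ z₂ be points with the closed segment [z₁, z₂] ⊆ U. Let θ, θ′ ∈ ℝ with θ′ ≤ θ + π, and suppose that for every z ∈ [z₁, z₂] the derivative f′(z) lies in the open sector S(θ, θ′) = {ρ·e^{iφ} : ρ > 0, θ < φ < θ′}. Then (f(z₂) − f(z₁))/(z₂ − z₁) ∈ S(θ, θ′). -/
/-!
Writing `γ t = z₁ + t (z₂ - z₁)`, the fundamental theorem of calculus gives
`(f z₂ - f z₁) / (z₂ - z₁) = ∫₀¹ f' (γ t) dt`, an average of values of `f'` in the sector. A sector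
of opening at most `π` is the intersection of the two open half-planes bounded by its edges, and
a linear functional that is positive on a continuous integrand has positive integral, so the
average stays in both half-planes.
-/

open Complex

def sector (θ θ' : ℝ) : Set ℂ :=
  {z | ∃ ρ φ : ℝ, 0 < ρ ∧ θ < φ ∧ φ < θ' ∧ z = (ρ : ℂ) * Complex.exp ((φ : ℂ) * I)}

open Set

namespace Complex

lemma arg_mem_Ioo_of_im_pos {z : ℂ} (hz : 0 < z.im) : arg z ∈ Ioo 0 Real.pi := by
  refine ⟨(arg_nonneg_iff.2 hz.le).lt_of_ne fun h ↦ ?_, arg_lt_pi_iff.2 (Or.inr hz.ne')⟩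
  exact hz.ne' (arg_eq_zero_iff.1 h.symm).2

lemma im_exp_neg_mul_polar (ψ ρ φ : ℝ) :
    (exp (-ψ * I) * (ρ * exp (φ * I))).im = ρ * Real.sin (φ - ψ) := by
  rw [mul_left_comm, ← exp_add, show -ψ * I + φ * I = ((φ - ψ : ℝ) : ℂ) * I by push_cast; ring,
    im_ofReal_mul, exp_ofReal_mul_I_im]

end Complex

lemma lt_of_mem_sector {θ θ' : ℝ} {z : ℂ} (hz : z ∈ sector θ θ') : θ < θ' := by
  obtain ⟨-, φ, -, h₁, h₂, -⟩ := hz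
  exact h₁.trans h₂

lemma mem_sector_iff {θ θ' : ℝ} (hlt : θ < θ') (hθ : θ' ≤ θ + Real.pi) {z : ℂ} :
    z ∈ sector θ θ' ↔ 0 < (exp (-θ * I) * z).im ∧ (exp (-θ' * I) * z).im < 0 := by
  constructor
  · rintro ⟨ρ, φ, hρ, h₁, h₂, rfl⟩
    rw [im_exp_neg_mul_polar, im_exp_neg_mul_polar]
    exact ⟨mul_pos hρ (Real.sin_pos_of_pos_of_lt_pi (by linarith) (by linarith)),
      mul_neg_of_pos_of_neg hρ (Real.sin_neg_of_neg_of_neg_pi_lt (by linarith) (by linarith))⟩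
  · rintro ⟨hpos, hneg⟩
    set w := exp (-θ * I) * z
    have hw : 0 < ‖w‖ := norm_pos_iff.2 fun h ↦ by simp [h] at hpos
    obtain ⟨harg₀, hargπ⟩ := arg_mem_Ioo_of_im_pos hpos
    have hz : z = ‖w‖ * exp ((θ + arg w : ℝ) * I) := by
      rw [ofReal_add, add_mul, exp_add, mul_left_comm, norm_mul_exp_arg_mul_I, ← mul_assoc,
        ← exp_add]
      simp
    refine ⟨‖w‖, θ + arg w, hw, by linarith, ?_, hz⟩
    by_contra! hge
    rw [hz, im_exp_neg_mul_polar] at hneg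
    have := Real.sin_nonneg_of_nonneg_of_le_pi (x := θ + arg w - θ') (by linarith) (by linarith)
    nlinarith

lemma im_mul_intervalIntegral_pos {g : ℝ → ℂ} {a b : ℝ} (hab : a < b)
    (hg : ContinuousOn g (Icc a b)) (w : ℂ) (hpos : ∀ t ∈ Icc a b, 0 < (w * g t).im) :
    0 < (w * ∫ t in a..b, g t).im := by
  have hint : IntervalIntegrable (fun t ↦ w * g t) MeasureTheory.volume a b :=
    (hg.const_smul w).intervalIntegrable_of_Icc hab.le
  rw [← intervalIntegral.integral_const_mul, ← imCLM_apply,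
    ← imCLM.intervalIntegral_comp_comm hint]
  exact intervalIntegral.intervalIntegral_pos_of_pos_on
    ((continuous_im.comp_continuousOn (hg.const_smul w)).intervalIntegrable_of_Icc hab.le)
    (fun t ht ↦ hpos t (Ioo_subset_Icc_self ht)) hab

lemma intervalIntegral_mem_sector {θ θ' : ℝ} (hθ : θ' ≤ θ + Real.pi) {g : ℝ → ℂ} {a b : ℝ}
    (hab : a < b) (hg : ContinuousOn g (Icc a b)) (hmem : ∀ t ∈ Icc a b, g t ∈ sector θ θ') :
    ∫ t in a..b, g t ∈ sector θ θ' := by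
  have hlt := lt_of_mem_sector (hmem a (left_mem_Icc.2 hab.le))
  have hhalf := fun t ht ↦ (mem_sector_iff hlt hθ).1 (hmem t ht)
  refine (mem_sector_iff hlt hθ).2
    ⟨im_mul_intervalIntegral_pos hab hg _ fun t ht ↦ (hhalf t ht).1, ?_⟩
  have := im_mul_intervalIntegral_pos hab hg (-exp (-θ' * I)) fun t ht ↦ by
    simpa only [neg_mul, neg_im, neg_pos] using (hhalf t ht).2
  simpa only [neg_mul, neg_im, neg_pos] using this

section Segment

variable {U : Set ℂ} {f : ℂ → ℂ} {z₁ z₂ : ℂ}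

lemma add_smul_sub_mem_segment {t : ℝ} (ht : t ∈ Icc (0 : ℝ) 1) :
    z₁ + t • (z₂ - z₁) ∈ segment ℝ z₁ z₂ :=
  segment_eq_image' ℝ z₁ z₂ ▸ mem_image_of_mem _ ht

variable (hU : IsOpen U) (hf : DifferentiableOn ℂ f U) (hseg : segment ℝ z₁ z₂ ⊆ U)
include hU hf hseg

lemma continuousOn_deriv_segment :
    ContinuousOn (fun t : ℝ ↦ deriv f (z₁ + t • (z₂ - z₁))) (Icc 0 1) :=
  (hf.deriv hU).continuousOn.comp (by fun_prop) fun _ ht ↦ hseg (add_smul_sub_mem_segment ht)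

lemma sub_eq_mul_integral_deriv_segment :
    f z₂ - f z₁ = (z₂ - z₁) * ∫ t in (0 : ℝ)..1, deriv f (z₁ + t • (z₂ - z₁)) := by
  have := intervalIntegral.integral_unitInterval_deriv_eq_sub
    (continuousOn_deriv_segment hU hf hseg) fun t ht ↦
      (hf.differentiableAt (hU.mem_nhds (hseg (add_smul_sub_mem_segment ht)))).hasDerivAt
  rw [add_sub_cancel] at this
  exact this.symm

end Segment

theorem stmt9 (U : Set ℂ) (hU : IsOpen U) (f : ℂ → ℂ)
    (hf : DifferentiableOn ℂ f U)
    (z₁ z₂ : ℂ) (hne : z₁ ≠ z₂) (hseg : segment ℝ z₁ z₂ ⊆ U)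
    (θ θ' : ℝ) (hθ : θ' ≤ θ + Real.pi)
    (hd : ∀ z ∈ segment ℝ z₁ z₂, deriv f z ∈ sector θ θ') :
    (f z₂ - f z₁) / (z₂ - z₁) ∈ sector θ θ' := by
  rw [sub_eq_mul_integral_deriv_segment hU hf hseg,
    mul_div_cancel_left₀ _ (sub_ne_zero.2 hne.symm)]
  exact intervalIntegral_mem_sector hθ zero_lt_one (continuousOn_deriv_segment hU hf hseg)
    fun t ht ↦ hd _ (add_smul_sub_mem_segment ht)
end
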